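/- Starting step of moving planes via logarithmic blow-up: suppose w_λ is antisymmetric across T_λ, achieves a negative minimum at x⁰ ∈ H_λ with w_λ ≥ 0 on Σ_λ \ H_λ, and satisfies L_Δ w_λ(x⁰) ≥ a(x⁰_n) M w_λ(x⁰) with 0 ≤ M ≤ M₀ and 0 ≤ a(x⁰_n) ≤ a(l+m), where l < x⁰_n < λ < l + m/2. If in addition (-Δ)^L w_λ(x⁰) ≤ C_n w_λ(x⁰) c (ln(1/4) - ln m) with c > 0 and ln(1/4) - ln m > 0, then a(l+m)/(ln(1/4) - ln m) ≥ c C_n / M₀ > 0. Hence if a(l+m)/(-ln m) → 0 as m → 0⁺, such a negative minimum cannot exist for m small. -/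

import Mathlib

open MeasureTheory Metric Filter Set

noncomputable section

/-- ℝⁿ with n = N+1 coordinates, Euclidean norm. -/
abbrev E (n : ℕ) := EuclideanSpace ℝ (Fin (n+1))

/-- Reflection of a point across the hyperplane {x_n = λ}. -/
def reflect (n : ℕ) (lam : ℝ) (y : E n) : E n :=
  WithLp.toLp 2 (Function.update (WithLp.ofLp y) (Fin.last n) (2*lam - y (Fin.last n)))

/-- The first n coordinates x'. -/
def proj (n : ℕ) (x : E n) : EuclideanSpace ℝ (Fin n) := WithLp.toLp 2 (fun i : Fin n => x i.castSucc)

/-- The normalization constant C_n = π^{-d/2} Γ(d/2) with d = n+1 the dimension. -/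
def Cconst (n : ℕ) : ℝ := Real.pi ^ (-(((n:ℝ)+1)/2)) * Real.Gamma (((n:ℝ)+1)/2)

/-- Integrand of the logarithmic Laplacian. -/
def kern (n : ℕ) (u : E n → ℝ) (x y : E n) : ℝ :=
  ((Metric.ball x 1).indicator (fun _ => u x) y - u y) / ‖x - y‖ ^ (n+1)

/-- `logLapAt n u x L` : the principal value C_n P.V.∫ (u(x)1_{B₁(x)}(y)-u(y))/|x-y|ᵈ dy
exists and equals `L`, i.e. (-Δ)^L u (x) = L. -/
def logLapAt (n : ℕ) (u : E n → ℝ) (x : E n) (L : ℝ) : Prop :=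
  Tendsto (fun ε : ℝ => Cconst n * ∫ y in {y : E n | ε < ‖x - y‖}, kern n u x y)
    (nhdsWithin 0 (Set.Ioi 0)) (nhds L)

/-- The class L₀ of admissible functions. -/
def memL0 (n : ℕ) (u : E n → ℝ) : Prop :=
  Integrable (fun x : E n => |u x| / (1 + ‖x‖ ^ (n+1)))

/-- Locally C^{1,1} on a set: near each point, differentiable with locally Lipschitz derivative. -/
def C11loc (n : ℕ) (u : E n → ℝ) (s : Set (E n)) : Prop :=
  ∀ x ∈ s, ∃ t ∈ nhdsWithin x s, DifferentiableOn ℝ u t ∧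
    ∃ K, LipschitzOnWith K (fderiv ℝ u) t

/-- Digamma function ψ = Γ'/Γ. -/
def digamma (s : ℝ) : ℝ := deriv Real.Gamma s / Real.Gamma s

/-- Euler–Mascheroni constant γ = -Γ'(1). -/
def eulerGamma : ℝ := -(deriv Real.Gamma 1)

/-- ρ_d = 2 ln 2 + ψ(d/2) - γ for dimension d = n+1. -/
def rho (n : ℕ) : ℝ := 2 * Real.log 2 + digamma (((n:ℝ)+1)/2) - eulerGamma

/-- The coercive Lipschitz epigraph Ω = {x : x_n > φ(x')}. -/
def Omega (n : ℕ) (phi : EuclideanSpace ℝ (Fin n) → ℝ) : Set (E n) :=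
  {x | phi (proj n x) < x (Fin.last n)}

/-- The half space Σ_λ = {x_n < λ}. -/
def SigmaLam (n : ℕ) (lam : ℝ) : Set (E n) := {x | x (Fin.last n) < lam}

/-- the real-analytic implication of Step 1: combining the
differential inequality L_Δw(x⁰) ≥ a(x⁰_n) M w_λ(x⁰) (with w_λ(x⁰) < 0,
0 ≤ M ≤ M₀, 0 ≤ a(x⁰_n) ≤ a(l+m)) with the kernel lower bound
(-Δ)^L w_λ(x⁰) ≤ C_n w_λ(x⁰) c (ln(1/4) - ln m) yields
a(l+m)/(ln(1/4) - ln m) ≥ c C_n / M₀ > 0. -/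
theorem stmt19 (Cn rhoN c m w0 aval alm M M0 LDel pv : ℝ)
    (hw0 : w0 < 0) (hM : 0 ≤ M) (hMM0 : M ≤ M0) (hM0 : 0 < M0)
    (haval : 0 ≤ aval) (havalm : aval ≤ alm)
    (hc : 0 < c) (hCn : 0 < Cn) (hrho : 0 < rhoN)
    (hD : 0 < Real.log (1/4) - Real.log m)
    (hge : aval * M * w0 ≤ LDel)
    (heq : LDel = pv + rhoN * w0)
    (hle : pv ≤ Cn * w0 * (c * (Real.log (1/4) - Real.log m))) :
    c * Cn / M0 ≤ alm / (Real.log (1/4) - Real.log m) ∧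
      0 < alm / (Real.log (1/4) - Real.log m) := by
  set D := Real.log (1/4) - Real.log m with hDdef
  have h1 : aval * M * w0 ≤ Cn * w0 * (c * D) + rhoN * w0 := by
    calc aval * M * w0 ≤ LDel := hge
      _ = pv + rhoN * w0 := heq
      _ ≤ _ := by linarith
  have h2 : Cn * c * D + rhoN ≤ aval * M := by nlinarith [hw0, h1]
  have h3 : aval * M ≤ alm * M0 :=
    mul_le_mul havalm hMM0 hM (le_trans haval havalm)
  have h4 : Cn * c * D ≤ alm * M0 := by nlinarith
  have halm : 0 < alm := by nlinarith [mul_pos (mul_pos hCn hc) hD]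
  constructor
  · rw [div_le_div_iff₀ hM0 hD]; nlinarith
  · exact div_pos halm hD
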